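/- arXiv:1509.06015 — 2 statements merged into one kernel-verified Lean document; each statement's English description precedes it below -/
import Mathlib

section
/- Given r > 0, there exist γ > 0 and T̃ > 0 such that for every T* ∈ [0, T̃], the map F defined by F(ρ)_t(x) = ρ₀(x) exp(−∫₀ᵗ h(ρ_s, x) ds) + ∫₀ᵗ R₂(ρ_s, x) exp(−∫_s^t h(ρ_σ, x) dσ) ds maps the set B_{T*,γ}(r) into itself; that is, if ρ ∈ C([0,T*] → L^∞(ℝ^d)) satisfies ‖ρ‖_{T*,γ} ≤ r and ρ_t ≥ 0 for all t ∈ [0,T*], and ρ₀ ∈ L^∞(ℝ^d) with ρ₀ ≥ 0 and ‖ρ₀‖_{L^∞} ≤ r, then F(ρ) ∈ C([0,T*] → L^∞(ℝ^d)), ‖F(ρ)‖_{T*,γ} ≤ r and F(ρ)_t ≥ 0 for all t ∈ [0,T*]. In fact γ > 1 + 3⟨c₁⟩r/(2⟨c₂⟩) suffices. -/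
open MeasureTheory Set

noncomputable section

/-- Euclidean space `ℝ^d`, modeled as functions `Fin d → ℝ`. -/
abbrev Rd (d : ℕ) := Fin d → ℝ

/-- The (sup) `L^∞` norm of a function on `ℝ^d`. -/
def linf {d : ℕ} (f : Rd d → ℝ) : ℝ := ⨆ x, |f x|

/-- Membership in `L^∞(ℝ^d)`: measurable and (everywhere) bounded. -/
def MemLinf {d : ℕ} (f : Rd d → ℝ) : Prop := Measurable f ∧ ∃ M : ℝ, ∀ x, |f x| ≤ M

/-- `h(ρ,x) = (1/2) ∬ (c₁(x,y;z)+c₁(y,x;z)) ρ(y) dy dz + ⟨c₂⟩`. -/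
def hker {d : ℕ} (c₁ : Rd d → Rd d → Rd d → ℝ) (C2 : ℝ) (ρ : Rd d → ℝ) (x : Rd d) : ℝ :=
  1/2 * (∫ y, ∫ z, (c₁ x y z + c₁ y x z) * ρ y) + C2

/-- `R₂(ρ,x)`, the positive part of the right-hand side of the kinetic equation. -/
def R2 {d : ℕ} (c₁ : Rd d → Rd d → Rd d → ℝ) (c₂ : Rd d → Rd d → ℝ)
    (φ₁ φ₂ : Rd d → ℝ) (ρ : Rd d → ℝ) (x : Rd d) : ℝ :=
  1/2 * (∫ y, ∫ z, c₁ y z x * Real.exp (-∫ u, φ₁ (x - u) * ρ u) * ρ y * ρ z)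
    + 1/2 * (∫ y, ∫ z, (c₁ x y z + c₁ y x z) *
        (1 - Real.exp (-∫ u, φ₁ (z - u) * ρ u)) * ρ x * ρ y)
    + (∫ y, c₂ y x * Real.exp (-∫ u, φ₂ (x - u) * ρ u) * ρ y)
    + (∫ y, c₂ x y * (1 - Real.exp (-∫ u, φ₂ (y - u) * ρ u)) * ρ x)

/-- The fixed point map `F` given by the right-hand side of the integral equation. -/
def Fmap {d : ℕ} (c₁ : Rd d → Rd d → Rd d → ℝ) (c₂ : Rd d → Rd d → ℝ)
    (φ₁ φ₂ : Rd d → ℝ) (C2 : ℝ) (ρ₀ : Rd d → ℝ) (ρ : ℝ → Rd d → ℝ) (t : ℝ) (x : Rd d) : ℝ :=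
  ρ₀ x * Real.exp (-∫ s in (0:ℝ)..t, hker c₁ C2 (ρ s) x)
    + ∫ s in (0:ℝ)..t, R2 c₁ c₂ φ₁ φ₂ (ρ s) x * Real.exp (-∫ σ in s..t, hker c₁ C2 (ρ σ) x)

/-- The weighted norm `‖ρ‖_{T,γ} = sup_{t∈[0,T]} e^{-γ⟨c₂⟩t} ‖ρ_t‖_{L^∞}`. -/
def normTg {d : ℕ} (T γ C2 : ℝ) (ρ : ℝ → Rd d → ℝ) : ℝ :=
  ⨆ t : Icc (0:ℝ) T, Real.exp (-(γ * C2 * t.1)) * linf (ρ t.1)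

/-- Continuity on `S ⊆ ℝ` of a curve of functions, in the `L^∞` norm. -/
def LinfContOn {d : ℕ} (S : Set ℝ) (ρ : ℝ → Rd d → ℝ) : Prop :=
  ∀ t ∈ S, ∀ ε > 0, ∃ δ > 0, ∀ s ∈ S, |s - t| < δ → linf (fun x => ρ s x - ρ t x) < ε

/-- Membership in the ball `B_{T,γ}(r) ⊆ C([0,T] → L^∞)`. -/
def memB {d : ℕ} (T γ C2 r : ℝ) (ρ : ℝ → Rd d → ℝ) : Prop :=
  LinfContOn (Icc 0 T) ρ ∧ (∀ t ∈ Icc (0:ℝ) T, MemLinf (ρ t)) ∧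
    (∀ t ∈ Icc (0:ℝ) T, ∀ x, 0 ≤ ρ t x) ∧ normTg T γ C2 ρ ≤ r

/-- Differentiability at `t` (within `S ⊆ ℝ`) of a curve, in the `L^∞` norm,
with derivative `g`. -/
def HasLinfDerivWithinAt {d : ℕ} (ρ : ℝ → Rd d → ℝ) (g : Rd d → ℝ) (S : Set ℝ) (t : ℝ) : Prop :=
  ∀ ε > 0, ∃ δ > 0, ∀ s ∈ S, |s - t| < δ →
    linf (fun x => ρ s x - ρ t x - (s - t) * g x) ≤ ε * |s - t|

/-- The right-hand side of the kinetic equation: `−ρ(x) h(ρ,x) + R₂(ρ,x)`. -/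
def kderiv {d : ℕ} (c₁ : Rd d → Rd d → Rd d → ℝ) (c₂ : Rd d → Rd d → ℝ)
    (φ₁ φ₂ : Rd d → ℝ) (C2 : ℝ) (ρ : Rd d → ℝ) : Rd d → ℝ :=
  fun x => -(ρ x) * hker c₁ C2 ρ x + R2 c₁ c₂ φ₁ φ₂ ρ x

/-- `ρ` is a (local) classical solution of the kinetic equation on `[0,T]` with initial
value `ρ₀`: nonnegative and `L^∞`-valued, continuously differentiable in the `L^∞` norm,
and satisfying `d/dt ρ_t = −ρ_t·h(ρ_t,·) + R₂(ρ_t,·)`, `ρ_0 = ρ₀`. -/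
def IsSol {d : ℕ} (c₁ : Rd d → Rd d → Rd d → ℝ) (c₂ : Rd d → Rd d → ℝ)
    (φ₁ φ₂ : Rd d → ℝ) (C2 : ℝ) (ρ₀ : Rd d → ℝ) (T : ℝ) (ρ : ℝ → Rd d → ℝ) : Prop :=
  (∀ t ∈ Icc (0:ℝ) T, MemLinf (ρ t)) ∧ (∀ t ∈ Icc (0:ℝ) T, ∀ x, 0 ≤ ρ t x) ∧
    ρ 0 = ρ₀ ∧
    (∀ t ∈ Icc (0:ℝ) T, HasLinfDerivWithinAt ρ (kderiv c₁ c₂ φ₁ φ₂ C2 (ρ t)) (Icc 0 T) t) ∧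
    LinfContOn (Icc 0 T) (fun t => kderiv c₁ c₂ φ₁ φ₂ C2 (ρ t))


/-!
For fixed `x`, `F(ρ)_t(x)` is the mild solution of the linear equation `u' = -h u + R` whose
rates `h = h(ρ_s, x)` and `R = R₂(ρ_s, x)` are frozen along `ρ`. The marginal conditions on the
kernels give `⟨c₂⟩ ≤ h ≤ ⟨c₁⟩ m + ⟨c₂⟩` and `0 ≤ R₂ ≤ (3/2) ⟨c₁⟩ m² + 2 ⟨c₂⟩ m` whenever
`0 ≤ ρ ≤ m`. In the ball, `ρ_s ≤ r e^{γ⟨c₂⟩s}`; once `T` is so small that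
`(3/2) ⟨c₁⟩ r e^{γ⟨c₂⟩T} ≤ (γ - 1) ⟨c₂⟩`, the source is at most `r (γ + 1) ⟨c₂⟩ e^{γ⟨c₂⟩s}`,
and for this source and decay rate `⟨c₂⟩` the function `r e^{γ⟨c₂⟩t}` is an exact solution,
hence dominates `F(ρ)`. Continuity in `L^∞` follows from a Lipschitz bound in `t` uniform in
`x`, and measurability in `x` from the joint measurability of `(s, x) ↦ ρ_s(x)`, which is
continuous in `s` and measurable in `x`.
-/
open Function Filter Topology

section Linf

variable {d : ℕ}

lemma abs_le_linf {f : Rd d → ℝ} (hf : ∃ M, ∀ x, |f x| ≤ M) (x : Rd d) : |f x| ≤ linf f := by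
  obtain ⟨M, hM⟩ := hf
  exact le_ciSup ⟨M, by rintro _ ⟨y, rfl⟩; exact hM y⟩ x

lemma linf_nonneg (f : Rd d → ℝ) : 0 ≤ linf f := Real.iSup_nonneg fun _ => abs_nonneg _

lemma linf_le {f : Rd d → ℝ} {M : ℝ} (h : ∀ x, |f x| ≤ M) : linf f ≤ M := ciSup_le h

lemma abs_sub_le_linf_sub {f g : Rd d → ℝ} (hf : MemLinf f) (hg : MemLinf g) (x : Rd d) :
    |f x - g x| ≤ linf fun x => f x - g x := by
  obtain ⟨Mf, hMf⟩ := hf.2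
  obtain ⟨Mg, hMg⟩ := hg.2
  exact abs_le_linf ⟨Mf + Mg, fun y => (abs_sub _ _).trans (add_le_add (hMf y) (hMg y))⟩ x

lemma abs_linf_sub_linf_le {f g : Rd d → ℝ} (hf : MemLinf f) (hg : MemLinf g) :
    |linf f - linf g| ≤ linf fun x => f x - g x := by
  have hfg := abs_sub_le_linf_sub hf hg
  rw [abs_sub_le_iff, sub_le_iff_le_add, sub_le_iff_le_add]
  constructor
  · refine linf_le fun x => ?_
    linarith [abs_sub_abs_le_abs_sub (f x) (g x), hfg x, abs_le_linf hg.2 x]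
  · refine linf_le fun x => ?_
    linarith [abs_sub_abs_le_abs_sub (g x) (f x), abs_sub_comm (g x) (f x), hfg x,
      abs_le_linf hf.2 x]

lemma LinfContOn.continuousOn_of_le {S : Set ℝ} {ρ : ℝ → Rd d → ℝ} (hρ : LinfContOn S ρ)
    {g : ℝ → ℝ} (hg : ∀ s ∈ S, ∀ t ∈ S, |g s - g t| ≤ linf fun x => ρ s x - ρ t x) :
    ContinuousOn g S := by
  refine Metric.continuousOn_iff.2 fun t ht ε hε => ?_
  obtain ⟨δ, hδ, hρδ⟩ := hρ t ht ε hε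
  exact ⟨δ, hδ, fun s hs hst => (hg s hs t ht).trans_lt (hρδ s hs hst)⟩

lemma LinfContOn.of_lipschitz {S : Set ℝ} {f : ℝ → Rd d → ℝ} {L : ℝ}
    (hf : ∀ s ∈ S, ∀ t ∈ S, s ≤ t → ∀ x, |f t x - f s x| ≤ L * (t - s)) :
    LinfContOn S f := by
  have hL : ∀ s ∈ S, ∀ t ∈ S, linf (fun x => f s x - f t x) ≤ |L| * |s - t| := by
    intro s hs t ht
    refine linf_le fun x => ?_
    rcases le_total s t with hst | hst
    · rw [abs_sub_comm (f s x), abs_sub_comm s, abs_of_nonneg (sub_nonneg.2 hst)]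
      exact (hf s hs t ht hst x).trans (mul_le_mul_of_nonneg_right (le_abs_self L) (by linarith))
    · rw [abs_of_nonneg (sub_nonneg.2 hst)]
      exact (hf t ht s hs hst x).trans (mul_le_mul_of_nonneg_right (le_abs_self L) (by linarith))
  intro t ht ε hε
  refine ⟨ε / (|L| + 1), by positivity, fun s hs hst => (hL s hs t ht).trans_lt ?_⟩
  calc |L| * |s - t| ≤ |L| * (ε / (|L| + 1)) := by gcongr
    _ < (|L| + 1) * (ε / (|L| + 1)) := by gcongr; linarith
    _ = ε := by field_simp

end Linf

section Ball

variable {d : ℕ} {T γ C2 r : ℝ}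

lemma linf_le_of_memB {ρ : ℝ → Rd d → ℝ} (hρ : memB T γ C2 r ρ) {t : ℝ} (ht : t ∈ Icc 0 T) :
    linf (ρ t) ≤ r * Real.exp (γ * C2 * t) := by
  obtain ⟨hcont, hmem, -, hnorm⟩ := hρ
  have hweighted : ContinuousOn (fun t => Real.exp (-(γ * C2 * t)) * linf (ρ t)) (Icc 0 T) :=
    (by fun_prop : Continuous fun t : ℝ => Real.exp (-(γ * C2 * t))).continuousOn.mul
      (hcont.continuousOn_of_le fun s hs t ht => abs_linf_sub_linf_le (hmem s hs) (hmem t ht))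
  have hbdd : BddAbove (range fun t : Icc (0:ℝ) T => Real.exp (-(γ * C2 * t)) * linf (ρ t)) :=
    (isCompact_Icc.bddAbove_image hweighted).mono
      (range_subset_iff.2 fun t => mem_image_of_mem _ t.2)
  have h := (le_ciSup hbdd ⟨t, ht⟩).trans hnorm
  rw [Real.exp_neg, inv_mul_le_iff₀ (Real.exp_pos _)] at h
  linarith

lemma memB_congr {f g : ℝ → Rd d → ℝ} (hfg : ∀ t ∈ Icc (0:ℝ) T, f t = g t)
    (hf : memB T γ C2 r f) : memB T γ C2 r g := by
  obtain ⟨hcont, hmem, hnn, hnorm⟩ := hf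
  refine ⟨fun t ht ε hε => ?_, fun t ht => hfg t ht ▸ hmem t ht,
    fun t ht => hfg t ht ▸ hnn t ht, ?_⟩
  · obtain ⟨δ, hδ, h⟩ := hcont t ht ε hε
    exact ⟨δ, hδ, fun s hs hst => hfg s hs ▸ hfg t ht ▸ h s hs hst⟩
  · unfold normTg at hnorm ⊢
    simpa only [hfg _ (Subtype.prop _)] using hnorm

lemma memB_of_lipschitz (hT : 0 ≤ T) {f : ℝ → Rd d → ℝ} {L : ℝ}
    (hlip : ∀ s ∈ Icc (0:ℝ) T, ∀ t ∈ Icc (0:ℝ) T, s ≤ t → ∀ x, |f t x - f s x| ≤ L * (t - s))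
    (hmeas : ∀ t ∈ Icc (0:ℝ) T, Measurable (f t)) (hnn : ∀ t ∈ Icc (0:ℝ) T, ∀ x, 0 ≤ f t x)
    (hle : ∀ t ∈ Icc (0:ℝ) T, ∀ x, f t x ≤ r * Real.exp (γ * C2 * t)) :
    memB T γ C2 r f := by
  have hlinf : ∀ t ∈ Icc (0:ℝ) T, linf (f t) ≤ r * Real.exp (γ * C2 * t) := fun t ht =>
    linf_le fun x => (abs_of_nonneg (hnn t ht x)).trans_le (hle t ht x)
  refine ⟨LinfContOn.of_lipschitz hlip, fun t ht => ⟨hmeas t ht, _, fun x =>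
    (abs_of_nonneg (hnn t ht x)).trans_le (hle t ht x)⟩, hnn, ?_⟩
  have : Nonempty (Icc (0:ℝ) T) := ⟨⟨0, le_rfl, hT⟩⟩
  refine ciSup_le fun t => ?_
  calc Real.exp (-(γ * C2 * t)) * linf (f t)
      ≤ Real.exp (-(γ * C2 * t)) * (r * Real.exp (γ * C2 * t)) := by
        gcongr; exact hlinf t t.2
    _ = r := by rw [mul_left_comm, ← Real.exp_add, neg_add_cancel, Real.exp_zero, mul_one]

end Ball

section Duhamel

/-- The mild solution of `u' = -h u + R`, `u 0 = a`. -/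
def duhamel (a : ℝ) (h R : ℝ → ℝ) (t : ℝ) : ℝ :=
  a * Real.exp (-∫ s in (0:ℝ)..t, h s) + ∫ s in (0:ℝ)..t, R s * Real.exp (-∫ σ in s..t, h σ)

variable {h R : ℝ → ℝ} {a : ℝ}

lemma intervalIntegrable_of_abs_le {f : ℝ → ℝ} (hf : Measurable f) {B : ℝ}
    (hB : ∀ s, |f s| ≤ B) (u v : ℝ) : IntervalIntegrable f volume u v :=
  (intervalIntegrable_const (c := B)).mono_fun hf.aestronglyMeasurable
    (ae_of_all _ fun s => (hB s).trans (le_abs_self B))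

lemma continuous_integral_left (hh : ∀ u v, IntervalIntegrable h volume u v) (t : ℝ) :
    Continuous fun s => ∫ σ in s..t, h σ := by
  have : (fun s => ∫ σ in s..t, h σ) = fun s => (∫ σ in (0:ℝ)..t, h σ) - ∫ σ in (0:ℝ)..s, h σ :=
    funext fun s => (intervalIntegral.integral_interval_sub_left (hh 0 t) (hh 0 s)).symm
  exact this ▸ continuous_const.sub (intervalIntegral.continuous_primitive hh 0)

lemma intervalIntegrable_mul_exp_neg_integral (hh : ∀ u v, IntervalIntegrable h volume u v)
    (hR : ∀ u v, IntervalIntegrable R volume u v) (t u v : ℝ) :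
    IntervalIntegrable (fun s => R s * Real.exp (-∫ σ in s..t, h σ)) volume u v :=
  (hR u v).mul_continuousOn (continuous_integral_left hh t).neg.rexp.continuousOn

lemma exp_neg_integral_le_one (hh0 : ∀ s, 0 ≤ h s) {s t : ℝ} (hst : s ≤ t) :
    Real.exp (-∫ σ in s..t, h σ) ≤ 1 := by
  rw [Real.exp_le_one_iff, neg_nonpos]
  exact intervalIntegral.integral_nonneg hst fun σ _ => hh0 σ

lemma abs_integral_mul_exp_neg_integral_le (hh0 : ∀ s, 0 ≤ h s) {B : ℝ} (hRB : ∀ s, |R s| ≤ B)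
    {u v : ℝ} (huv : u ≤ v) :
    |∫ s in u..v, R s * Real.exp (-∫ σ in s..v, h σ)| ≤ B * (v - u) := by
  have := intervalIntegral.norm_integral_le_of_norm_le_const (a := u) (b := v) (C := B)
    (f := fun s => R s * Real.exp (-∫ σ in s..v, h σ)) fun s hs => by
      rw [uIoc_of_le huv] at hs
      rw [Real.norm_eq_abs, abs_mul, abs_of_pos (Real.exp_pos _), ← mul_one B]
      exact mul_le_mul (hRB s) (exp_neg_integral_le_one hh0 hs.2) (Real.exp_pos _).le
        ((abs_nonneg _).trans (hRB s))
  rwa [Real.norm_eq_abs, abs_of_nonneg (sub_nonneg.2 huv)] at this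

lemma duhamel_nonneg (ha : 0 ≤ a) (hR : ∀ s, 0 ≤ R s) {t : ℝ} (ht : 0 ≤ t) :
    0 ≤ duhamel a h R t :=
  add_nonneg (mul_nonneg ha (Real.exp_pos _).le)
    (intervalIntegral.integral_nonneg ht fun s _ => mul_nonneg (hR s) (Real.exp_pos _).le)

lemma duhamel_congr {a t : ℝ} {h h' R R' : ℝ → ℝ} (ht : 0 ≤ t) (hh : EqOn h h' (Icc 0 t))
    (hR : EqOn R R' (Icc 0 t)) : duhamel a h R t = duhamel a h' R' t := by
  have hsub : ∀ s ∈ uIcc 0 t, EqOn h h' (uIcc s t) := fun s hs => by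
    rw [uIcc_of_le ht] at hs
    rw [uIcc_of_le hs.2]
    exact hh.mono (Icc_subset_Icc_left hs.1)
  unfold duhamel
  rw [intervalIntegral.integral_congr (hsub 0 (left_mem_uIcc))]
  congr 1
  refine intervalIntegral.integral_congr fun s hs => ?_
  rw [intervalIntegral.integral_congr (hsub s hs), hR (by rwa [uIcc_of_le ht] at hs)]

lemma duhamel_eq_exp_mul_add (hh : ∀ u v, IntervalIntegrable h volume u v)
    (hR : ∀ u v, IntervalIntegrable R volume u v) (u v : ℝ) :
    duhamel a h R v = Real.exp (-∫ σ in u..v, h σ) * duhamel a h R u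
      + ∫ s in u..v, R s * Real.exp (-∫ σ in s..v, h σ) := by
  have hsplit : ∀ s, ∫ σ in s..v, h σ = (∫ σ in s..u, h σ) + ∫ σ in u..v, h σ := fun s =>
    (intervalIntegral.integral_add_adjacent_intervals (hh s u) (hh u v)).symm
  have hinit : ∫ s in (0:ℝ)..u, R s * Real.exp (-∫ σ in s..v, h σ)
      = Real.exp (-∫ σ in u..v, h σ) * ∫ s in (0:ℝ)..u, R s * Real.exp (-∫ σ in s..u, h σ) := by
    rw [← intervalIntegral.integral_const_mul]
    congr 1 with s
    rw [hsplit, neg_add, Real.exp_add]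
    ring
  unfold duhamel
  rw [← intervalIntegral.integral_add_adjacent_intervals
    (intervalIntegrable_mul_exp_neg_integral hh hR v 0 u)
    (intervalIntegrable_mul_exp_neg_integral hh hR v u v), hinit, hsplit 0, neg_add, Real.exp_add]
  ring

lemma abs_duhamel_le (hh0 : ∀ s, 0 ≤ h s) {B : ℝ} (hRB : ∀ s, |R s| ≤ B) {t : ℝ} (ht : 0 ≤ t) :
    |duhamel a h R t| ≤ |a| + B * t := by
  have hsource := abs_integral_mul_exp_neg_integral_le hh0 hRB ht
  rw [sub_zero] at hsource
  unfold duhamel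
  calc _ ≤ |a * Real.exp (-∫ s in (0:ℝ)..t, h s)|
        + |∫ s in (0:ℝ)..t, R s * Real.exp (-∫ σ in s..t, h σ)| := abs_add_le _ _
    _ ≤ |a| * 1 + B * t := by
        rw [abs_mul, abs_of_pos (Real.exp_pos _)]
        gcongr
        exact exp_neg_integral_le_one hh0 ht
    _ = |a| + B * t := by ring

lemma abs_duhamel_sub_le (hh : ∀ u v, IntervalIntegrable h volume u v)
    (hR : ∀ u v, IntervalIntegrable R volume u v) (hh0 : ∀ s, 0 ≤ h s) {K B : ℝ}
    (hK : ∀ s, h s ≤ K) (hRB : ∀ s, |R s| ≤ B) {u v : ℝ} (hu : 0 ≤ u) (huv : u ≤ v) :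
    |duhamel a h R v - duhamel a h R u| ≤ (K * (|a| + B * u) + B) * (v - u) := by
  have hdecay0 := sub_nonneg.2 (exp_neg_integral_le_one hh0 huv)
  rw [duhamel_eq_exp_mul_add hh hR u v]
  set H := ∫ σ in u..v, h σ
  have hH0 : 0 ≤ H := intervalIntegral.integral_nonneg huv fun σ _ => hh0 σ
  have hHK : H ≤ K * (v - u) := by
    have := intervalIntegral.integral_mono_on huv (hh u v) intervalIntegrable_const
      fun s _ => hK s
    rwa [intervalIntegral.integral_const, smul_eq_mul, mul_comm] at this
  have hdecay : 1 - Real.exp (-H) ≤ H := by linarith [Real.add_one_le_exp (-H)]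
  have hDu := abs_duhamel_le (a := a) hh0 hRB hu
  calc _ = |(∫ s in u..v, R s * Real.exp (-∫ σ in s..v, h σ))
          - (1 - Real.exp (-H)) * duhamel a h R u| := by congr 1; ring
    _ ≤ B * (v - u) + H * (|a| + B * u) := by
        refine (abs_sub _ _).trans
          (add_le_add (abs_integral_mul_exp_neg_integral_le hh0 hRB huv) ?_)
        rw [abs_mul, abs_of_nonneg hdecay0]
        exact mul_le_mul hdecay hDu (abs_nonneg _) hH0
    _ ≤ B * (v - u) + K * (v - u) * (|a| + B * u) := by
        gcongr
        exact (abs_nonneg _).trans hDu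
    _ = (K * (|a| + B * u) + B) * (v - u) := by ring

lemma duhamel_le_mul_exp (hh : ∀ u v, IntervalIntegrable h volume u v)
    (hR : ∀ u v, IntervalIntegrable R volume u v) {c l r t : ℝ} (ht : 0 ≤ t)
    (hc : ∀ s ∈ Icc 0 t, c ≤ h s) (ha0 : 0 ≤ a) (ha : a ≤ r) (hR0 : ∀ s ∈ Icc 0 t, 0 ≤ R s)
    (hRle : ∀ s ∈ Icc 0 t, R s ≤ r * (l + c) * Real.exp (l * s)) :
    duhamel a h R t ≤ r * Real.exp (l * t) := by
  have hHc : ∀ s ∈ Icc 0 t, c * (t - s) ≤ ∫ σ in s..t, h σ := fun s hs => by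
    have := intervalIntegral.integral_mono_on hs.2 intervalIntegrable_const (hh s t)
      fun σ hσ => hc σ ⟨hs.1.trans hσ.1, hσ.2⟩
    rwa [intervalIntegral.integral_const, smul_eq_mul, mul_comm] at this
  have hinit : a * Real.exp (-∫ s in (0:ℝ)..t, h s) ≤ r * Real.exp (-(c * t)) := by
    have := hHc 0 ⟨le_rfl, ht⟩
    rw [sub_zero] at this
    exact mul_le_mul ha (Real.exp_le_exp.2 (by linarith)) (Real.exp_pos _).le (ha0.trans ha)
  have hsource : ∫ s in (0:ℝ)..t, R s * Real.exp (-∫ σ in s..t, h σ)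
      ≤ ∫ s in (0:ℝ)..t, r * Real.exp (-(c * t)) * ((l + c) * Real.exp ((l + c) * s)) := by
    refine intervalIntegral.integral_mono_on ht
      (intervalIntegrable_mul_exp_neg_integral hh hR t 0 t)
      (Continuous.intervalIntegrable (by fun_prop) _ _) fun s hs => ?_
    calc R s * Real.exp (-∫ σ in s..t, h σ)
        ≤ r * (l + c) * Real.exp (l * s) * Real.exp (-(c * (t - s))) :=
          mul_le_mul (hRle s hs) (Real.exp_le_exp.2 (by linarith [hHc s hs]))
            (Real.exp_pos _).le ((hR0 s hs).trans (hRle s hs))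
      _ = r * (l + c) * Real.exp (-(c * t) + (l + c) * s) := by
          rw [mul_assoc, ← Real.exp_add]; ring_nf
      _ = r * Real.exp (-(c * t)) * ((l + c) * Real.exp ((l + c) * s)) := by
          rw [Real.exp_add]; ring
  have hprimitive : ∫ s in (0:ℝ)..t, (l + c) * Real.exp ((l + c) * s)
      = Real.exp ((l + c) * t) - 1 := by
    rw [intervalIntegral.integral_eq_sub_of_hasDerivAt (f := fun s => Real.exp ((l + c) * s))
      (fun s _ => by simpa [mul_comm] using ((hasDerivAt_id s).const_mul (l + c)).exp)
      (Continuous.intervalIntegrable (by fun_prop) _ _), mul_zero, Real.exp_zero]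
  rw [intervalIntegral.integral_const_mul, hprimitive] at hsource
  unfold duhamel
  calc _ ≤ r * Real.exp (-(c * t)) + r * Real.exp (-(c * t)) * (Real.exp ((l + c) * t) - 1) :=
        add_le_add hinit hsource
    _ = r * Real.exp (l * t) := by
        rw [mul_sub, mul_one, add_sub_cancel, mul_assoc, ← Real.exp_add]
        ring_nf

end Duhamel

section Measurability

variable {α : Type*} [MeasurableSpace α]

@[fun_prop]
lemma Measurable.integral_right {β : Type*} [MeasurableSpace β] {ν : Measure β} [SFinite ν]
    {f : α → β → ℝ} (hf : Measurable (uncurry f)) : Measurable fun a => ∫ b, f a b ∂ν :=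
  hf.stronglyMeasurable.integral_prod_right.measurable

@[fun_prop]
lemma Measurable.intervalIntegral_right {f : α → ℝ → ℝ} (hf : Measurable (uncurry f))
    (u v : ℝ) : Measurable fun a => ∫ s in u..v, f a s := by
  simp only [intervalIntegral]
  fun_prop

lemma measurable_duhamel {a : α → ℝ} {h R : ℝ → α → ℝ} (ha : Measurable a)
    (hhm : Measurable (uncurry h)) (hRm : Measurable (uncurry R))
    (hh : ∀ x u v, IntervalIntegrable (fun s => h s x) volume u v) (t : ℝ) :
    Measurable fun x => duhamel (a x) (fun s => h s x) (fun s => R s x) t := by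
  set G : ℝ → α → ℝ := fun s x => ∫ σ in (0:ℝ)..s, h σ x
  have hG : Measurable (uncurry G) :=
    measurable_uncurry_of_continuous_of_measurable
      (fun x => intervalIntegral.continuous_primitive (hh x) 0)
      fun s => Measurable.intervalIntegral_right (f := fun x σ => h σ x)
        (hhm.comp measurable_swap) 0 s
  have hsub : ∀ x s, ∫ σ in s..t, h σ x = G t x - G s x := fun x s =>
    (intervalIntegral.integral_interval_sub_left (hh x 0 t) (hh x 0 s)).symm
  have hGc : ∀ {β : Type _} [MeasurableSpace β] {f : β → ℝ} {g : β → α}, Measurable f →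
      Measurable g → Measurable fun b => G (f b) (g b) := fun hf hg => hG.comp (hf.prodMk hg)
  have hRc : ∀ {β : Type _} [MeasurableSpace β] {f : β → ℝ} {g : β → α}, Measurable f →
      Measurable g → Measurable fun b => R (f b) (g b) := fun hf hg => hRm.comp (hf.prodMk hg)
  simp only [duhamel, hsub]
  fun_prop (disch := assumption)

end Measurability

section Kernels

variable {d : ℕ}

structure HasConstMarginals₃ (c : Rd d → Rd d → Rd d → ℝ) (C : ℝ) : Prop where
  measurable : Measurable fun p : Rd d × Rd d × Rd d => c p.1 p.2.1 p.2.2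
  nonneg : ∀ x y z, 0 ≤ c x y z
  integrable₁₂ : ∀ z, Integrable fun p : Rd d × Rd d => c p.1 p.2 z
  integrable₁₃ : ∀ y, Integrable fun p : Rd d × Rd d => c p.1 y p.2
  integrable₂₃ : ∀ x, Integrable fun p : Rd d × Rd d => c x p.1 p.2
  integral₁₂ : ∀ z, ∫ x, ∫ y, c x y z = C
  integral₁₃ : ∀ y, ∫ x, ∫ z, c x y z = C
  integral₂₃ : ∀ x, ∫ y, ∫ z, c x y z = C

structure HasConstMarginals₂ (c : Rd d → Rd d → ℝ) (C : ℝ) : Prop where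
  measurable : Measurable fun p : Rd d × Rd d => c p.1 p.2
  nonneg : ∀ x y, 0 ≤ c x y
  integrable₁ : ∀ y, Integrable fun x => c x y
  integrable₂ : ∀ x, Integrable fun y => c x y
  integral₁ : ∀ y, ∫ x, c x y = C
  integral₂ : ∀ x, ∫ y, c x y = C

namespace HasConstMarginals₃

variable {c : Rd d → Rd d → Rd d → ℝ} {C : ℝ}

lemma const_nonneg (hc : HasConstMarginals₃ c C) : 0 ≤ C :=
  hc.integral₂₃ 0 ▸ integral_nonneg fun _ => integral_nonneg fun _ => hc.nonneg _ _ _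

lemma integral_prod₁₂ (hc : HasConstMarginals₃ c C) (z : Rd d) :
    ∫ p : Rd d × Rd d, c p.1 p.2 z = C := by
  rw [Measure.volume_eq_prod, integral_prod _ (hc.integrable₁₂ z), hc.integral₁₂]

lemma integral_prod₁₃ (hc : HasConstMarginals₃ c C) (y : Rd d) :
    ∫ p : Rd d × Rd d, c p.1 y p.2 = C := by
  rw [Measure.volume_eq_prod, integral_prod _ (hc.integrable₁₃ y), hc.integral₁₃]

lemma integral_prod₂₃ (hc : HasConstMarginals₃ c C) (x : Rd d) :
    ∫ p : Rd d × Rd d, c x p.1 p.2 = C := by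
  rw [Measure.volume_eq_prod, integral_prod _ (hc.integrable₂₃ x), hc.integral₂₃]

lemma integral_prod_add (hc : HasConstMarginals₃ c C) (x : Rd d) :
    ∫ p : Rd d × Rd d, (c x p.1 p.2 + c p.1 x p.2) = 2 * C := by
  rw [integral_add (hc.integrable₂₃ x) (hc.integrable₁₃ x), hc.integral_prod₂₃,
    hc.integral_prod₁₃, two_mul]

end HasConstMarginals₃

lemma integral_mem_Icc_integral_mul {β : Type*} [MeasurableSpace β] {μ : Measure β}
    {F k : β → ℝ} {M : ℝ} (hF : ∀ x, F x ∈ Icc 0 (k x * M)) (hk : Integrable k μ) :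
    ∫ x, F x ∂μ ∈ Icc 0 ((∫ x, k x ∂μ) * M) := by
  rw [← integral_mul_const]
  exact ⟨integral_nonneg fun x => (hF x).1,
    integral_mono_of_nonneg (ae_of_all _ fun x => (hF x).1) (hk.mul_const M)
      (ae_of_all _ fun x => (hF x).2)⟩

lemma integral_integral_mem_Icc_integral_mul {β γ : Type*} [MeasurableSpace β]
    [MeasurableSpace γ] {μ : Measure β} {ν : Measure γ} [SFinite μ] [SFinite ν]
    {F : β → γ → ℝ} {k : β × γ → ℝ} {M : ℝ} (hF : ∀ x y, F x y ∈ Icc 0 (k (x, y) * M))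
    (hk : Integrable k (μ.prod ν)) :
    ∫ x, ∫ y, F x y ∂ν ∂μ ∈ Icc 0 ((∫ p, k p ∂μ.prod ν) * M) := by
  have hkM := hk.mul_const M
  rw [← integral_mul_const, integral_prod _ hkM]
  refine ⟨integral_nonneg fun x => integral_nonneg fun y => (hF x y).1,
    integral_mono_of_nonneg (ae_of_all _ fun x => integral_nonneg fun y => (hF x y).1)
      hkM.integral_prod_left ?_⟩
  filter_upwards [hkM.prod_right_ae] with x hx
  exact integral_mono_of_nonneg (ae_of_all _ fun y => (hF x y).1) hx
    (ae_of_all _ fun y => (hF x y).2)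

end Kernels

section Rates

variable {d : ℕ} {c₁ : Rd d → Rd d → Rd d → ℝ} {c₂ : Rd d → Rd d → ℝ} {φ₁ φ₂ : Rd d → ℝ}
  {C1 C2 : ℝ} {f : Rd d → ℝ} {m : ℝ}

lemma mul_mem_Icc_of_mem_unitInterval {k w u : ℝ} (hk : 0 ≤ k) (hw : w ∈ Icc (0:ℝ) 1)
    (hu : u ∈ Icc 0 m) : k * w * u ∈ Icc 0 (k * m) :=
  ⟨mul_nonneg (mul_nonneg hk hw.1) hu.1,
    by simpa using mul_le_mul (mul_le_of_le_one_right hk hw.2) hu.2 hu.1 hk⟩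

lemma mul_mul_mem_Icc_of_mem_unitInterval {k w u v : ℝ} (hk : 0 ≤ k) (hw : w ∈ Icc (0:ℝ) 1)
    (hu : u ∈ Icc 0 m) (hv : v ∈ Icc 0 m) : k * w * u * v ∈ Icc 0 (k * (m * m)) := by
  have h := mul_mem_Icc_of_mem_unitInterval hk hw hu
  exact ⟨mul_nonneg h.1 hv.1, by
    simpa [mul_assoc] using mul_le_mul h.2 hv.2 hv.1 (h.1.trans h.2)⟩

lemma exp_neg_integral_mem_unitInterval {φ : Rd d → ℝ} (hφ : ∀ u, 0 ≤ φ u)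
    (hf : ∀ u, 0 ≤ f u) (z : Rd d) :
    Real.exp (-∫ u, φ (z - u) * f u) ∈ Icc (0:ℝ) 1 ∧
      1 - Real.exp (-∫ u, φ (z - u) * f u) ∈ Icc (0:ℝ) 1 := by
  have hE : Real.exp (-∫ u, φ (z - u) * f u) ≤ 1 := by
    rw [Real.exp_le_one_iff, neg_nonpos]
    exact integral_nonneg fun u => mul_nonneg (hφ _) (hf u)
  have := Real.exp_pos (-∫ u, φ (z - u) * f u)
  exact ⟨⟨this.le, hE⟩, ⟨by linarith, by linarith⟩⟩

lemma hker_mem_Icc (hc₁ : HasConstMarginals₃ c₁ C1) (hf : ∀ y, f y ∈ Icc 0 m) (x : Rd d) :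
    hker c₁ C2 f x ∈ Icc C2 (C1 * m + C2) := by
  have := integral_integral_mem_Icc_integral_mul (k := fun p => c₁ x p.1 p.2 + c₁ p.1 x p.2)
    (F := fun y z => (c₁ x y z + c₁ y x z) * f y) (M := m)
    (fun y z => have hk := add_nonneg (hc₁.nonneg x y z) (hc₁.nonneg y x z)
      ⟨mul_nonneg hk (hf y).1, mul_le_mul_of_nonneg_left (hf y).2 hk⟩)
    ((hc₁.integrable₂₃ x).add (hc₁.integrable₁₃ x))
  rw [← Measure.volume_eq_prod, hc₁.integral_prod_add] at this
  unfold hker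
  constructor <;> linarith [this.1, this.2]

lemma R2_mem_Icc (hc₁ : HasConstMarginals₃ c₁ C1) (hc₂ : HasConstMarginals₂ c₂ C2)
    (hφ₁ : ∀ u, 0 ≤ φ₁ u) (hφ₂ : ∀ u, 0 ≤ φ₂ u) (hf : ∀ y, f y ∈ Icc 0 m) (x : Rd d) :
    R2 c₁ c₂ φ₁ φ₂ f x ∈ Icc 0 (3 / 2 * C1 * m ^ 2 + 2 * C2 * m) := by
  have hf0 : ∀ y, 0 ≤ f y := fun y => (hf y).1
  have hw₁ := exp_neg_integral_mem_unitInterval hφ₁ hf0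
  have hw₂ := exp_neg_integral_mem_unitInterval hφ₂ hf0
  have hterm₁ := integral_integral_mem_Icc_integral_mul (k := fun p => c₁ p.1 p.2 x)
    (fun y z => mul_mul_mem_Icc_of_mem_unitInterval (hc₁.nonneg y z x) (hw₁ x).1 (hf y) (hf z))
    (hc₁.integrable₁₂ x)
  have hterm₂ := integral_integral_mem_Icc_integral_mul
    (k := fun p => c₁ x p.1 p.2 + c₁ p.1 x p.2)
    (fun y z => mul_mul_mem_Icc_of_mem_unitInterval
      (add_nonneg (hc₁.nonneg x y z) (hc₁.nonneg y x z)) (hw₁ z).2 (hf x) (hf y))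
    ((hc₁.integrable₂₃ x).add (hc₁.integrable₁₃ x))
  have hterm₃ := integral_mem_Icc_integral_mul (k := fun y => c₂ y x)
    (fun y => mul_mem_Icc_of_mem_unitInterval (hc₂.nonneg y x) (hw₂ x).1 (hf y))
    (hc₂.integrable₁ x)
  have hterm₄ := integral_mem_Icc_integral_mul (k := fun y => c₂ x y)
    (fun y => mul_mem_Icc_of_mem_unitInterval (hc₂.nonneg x y) (hw₂ y).2 (hf x))
    (hc₂.integrable₂ x)
  rw [← Measure.volume_eq_prod, hc₁.integral_prod₁₂] at hterm₁
  rw [← Measure.volume_eq_prod, hc₁.integral_prod_add] at hterm₂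
  rw [hc₂.integral₁] at hterm₃
  rw [hc₂.integral₂] at hterm₄
  unfold R2
  constructor <;> linarith [hterm₁.1, hterm₁.2, hterm₂.1, hterm₂.2, hterm₃.1, hterm₃.2,
    hterm₄.1, hterm₄.2]

lemma R2_le_mul (hc₁ : HasConstMarginals₃ c₁ C1) (hc₂ : HasConstMarginals₂ c₂ C2)
    (hφ₁ : ∀ u, 0 ≤ φ₁ u) (hφ₂ : ∀ u, 0 ≤ φ₂ u) (hf : ∀ y, f y ∈ Icc 0 m) {κ : ℝ}
    (hκ : 3 / 2 * C1 * m ≤ κ) (x : Rd d) : R2 c₁ c₂ φ₁ φ₂ f x ≤ (κ + 2 * C2) * m := by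
  have hm : 0 ≤ m := (hf x).1.trans (hf x).2
  calc R2 c₁ c₂ φ₁ φ₂ f x ≤ 3 / 2 * C1 * m ^ 2 + 2 * C2 * m := (R2_mem_Icc hc₁ hc₂ hφ₁ hφ₂ hf x).2
    _ = (3 / 2 * C1 * m + 2 * C2) * m := by ring
    _ ≤ (κ + 2 * C2) * m := by gcongr

lemma measurable_hker (hc₁ : Measurable fun p : Rd d × Rd d × Rd d => c₁ p.1 p.2.1 p.2.2)
    {α : Type*} [MeasurableSpace α] {ρ : α → Rd d → ℝ} (hρ : Measurable (uncurry ρ)) :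
    Measurable (uncurry fun a x => hker c₁ C2 (ρ a) x) := by
  have hc : ∀ {β : Type _} [MeasurableSpace β] {f g k : β → Rd d}, Measurable f →
      Measurable g → Measurable k → Measurable fun b => c₁ (f b) (g b) (k b) :=
    fun hf hg hk => hc₁.comp (hf.prodMk (hg.prodMk hk))
  have hρc : ∀ {β : Type _} [MeasurableSpace β] {f : β → α} {g : β → Rd d}, Measurable f →
      Measurable g → Measurable fun b => ρ (f b) (g b) := fun hf hg => hρ.comp (hf.prodMk hg)
  unfold hker uncurry
  fun_prop (disch := assumption)

lemma measurable_R2 (hc₁ : Measurable fun p : Rd d × Rd d × Rd d => c₁ p.1 p.2.1 p.2.2)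
    (hc₂ : Measurable fun p : Rd d × Rd d => c₂ p.1 p.2) (hφ₁ : Measurable φ₁)
    (hφ₂ : Measurable φ₂) {α : Type*} [MeasurableSpace α] {ρ : α → Rd d → ℝ}
    (hρ : Measurable (uncurry ρ)) : Measurable (uncurry fun a x => R2 c₁ c₂ φ₁ φ₂ (ρ a) x) := by
  have hc : ∀ {β : Type _} [MeasurableSpace β] {f g k : β → Rd d}, Measurable f →
      Measurable g → Measurable k → Measurable fun b => c₁ (f b) (g b) (k b) :=
    fun hf hg hk => hc₁.comp (hf.prodMk (hg.prodMk hk))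
  have hc' : ∀ {β : Type _} [MeasurableSpace β] {f g : β → Rd d}, Measurable f →
      Measurable g → Measurable fun b => c₂ (f b) (g b) := fun hf hg => hc₂.comp (hf.prodMk hg)
  have hρc : ∀ {β : Type _} [MeasurableSpace β] {f : β → α} {g : β → Rd d}, Measurable f →
      Measurable g → Measurable fun b => ρ (f b) (g b) := fun hf hg => hρ.comp (hf.prodMk hg)
  unfold R2 uncurry
  fun_prop (disch := assumption)

end Rates

lemma exists_pos_forall_mul_exp_le {A b c : ℝ} (hA : 0 ≤ A) (hb : 0 ≤ b) (hAc : A < c) :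
    ∃ T > 0, ∀ s ≤ T, A * Real.exp (b * s) ≤ c := by
  have hnear : ∀ᶠ s in 𝓝 (0:ℝ), A * Real.exp (b * s) < c :=
    (by fun_prop : Continuous fun s => A * Real.exp (b * s)).continuousAt.eventually_lt
      continuousAt_const (by simpa using hAc)
  have hright : ∀ᶠ s in 𝓝[>] (0:ℝ), A * Real.exp (b * s) < c ∧ 0 < s :=
    (hnear.filter_mono nhdsWithin_le_nhds).and self_mem_nhdsWithin
  obtain ⟨T, hT, hT0⟩ := hright.exists
  exact ⟨T, hT0, fun s hs => le_trans (by gcongr) hT.le⟩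

section FixedPointMap

variable {d : ℕ} {c₁ : Rd d → Rd d → Rd d → ℝ} {c₂ : Rd d → Rd d → ℝ} {φ₁ φ₂ : Rd d → ℝ}
  {C1 C2 : ℝ}

lemma measurable_uncurry_IccExtend {T : ℝ} (hT : 0 ≤ T) {ρ : ℝ → Rd d → ℝ}
    (hcont : LinfContOn (Icc 0 T) ρ) (hmem : ∀ t ∈ Icc (0:ℝ) T, MemLinf (ρ t)) :
    Measurable (uncurry (IccExtend hT fun t : Icc (0:ℝ) T => ρ t)) := by
  refine measurable_uncurry_of_continuous_of_measurable (fun x => ?_)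
    fun s => (hmem _ (projIcc 0 T hT s).2).1
  have : ContinuousOn (fun t => ρ t x) (Icc 0 T) := hcont.continuousOn_of_le
    fun s hs t ht => abs_sub_le_linf_sub (hmem s hs) (hmem t ht) x
  exact (continuousOn_iff_continuous_domRestrict.1 this).Icc_extend'

lemma IccExtend_mem_Icc_of_memB {T γ C2 r : ℝ} (hT : 0 ≤ T) {ρ : ℝ → Rd d → ℝ}
    (hρ : memB T γ C2 r ρ) (s : ℝ) (x : Rd d) :
    IccExtend hT (fun t : Icc (0:ℝ) T => ρ t) s x
      ∈ Icc 0 (r * Real.exp (γ * C2 * projIcc 0 T hT s)) :=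
  have hs := (projIcc 0 T hT s).2
  ⟨hρ.2.2.1 _ hs x,
    (le_abs_self _).trans ((abs_le_linf (hρ.2.1 _ hs).2 x).trans (linf_le_of_memB hρ hs))⟩

lemma memB_duhamel {T γ C2 r c K B : ℝ} (hT : 0 ≤ T) (hc : 0 ≤ c) {h R : ℝ → Rd d → ℝ}
    (hhm : Measurable (uncurry h)) (hRm : Measurable (uncurry R))
    (hh : ∀ s x, h s x ∈ Icc c K) (hR : ∀ s x, R s x ∈ Icc 0 B)
    (hsource : ∀ s ∈ Icc (0:ℝ) T, ∀ x, R s x ≤ r * (γ * C2 + c) * Real.exp (γ * C2 * s))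
    {ρ₀ : Rd d → ℝ} (hρ₀ : MemLinf ρ₀) (hρ₀0 : ∀ x, 0 ≤ ρ₀ x) (hρ₀r : linf ρ₀ ≤ r) :
    memB T γ C2 r fun t x => duhamel (ρ₀ x) (fun s => h s x) (fun s => R s x) t := by
  have hρ₀le : ∀ x, |ρ₀ x| ≤ r := fun x => (abs_le_linf hρ₀.2 x).trans hρ₀r
  have hh0 : ∀ s x, 0 ≤ h s x := fun s x => hc.trans (hh s x).1
  have hK : 0 ≤ K := (hh0 0 0).trans (hh 0 0).2
  have hB : 0 ≤ B := (hR 0 0).1.trans (hR 0 0).2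
  have hhi : ∀ x u v, IntervalIntegrable (fun s => h s x) volume u v := fun x =>
    intervalIntegrable_of_abs_le (hhm.comp (measurable_id.prodMk measurable_const))
      fun s => abs_le.2 ⟨by linarith [hh0 s x], (hh s x).2⟩
  have hRi : ∀ x u v, IntervalIntegrable (fun s => R s x) volume u v := fun x =>
    intervalIntegrable_of_abs_le (hRm.comp (measurable_id.prodMk measurable_const))
      fun s => abs_le.2 ⟨by linarith [(hR s x).1], (hR s x).2⟩
  refine memB_of_lipschitz hT (L := K * (r + B * T) + B) (fun s hs t _ hst x => ?_)
    (fun t _ => measurable_duhamel hρ₀.1 hhm hRm hhi t)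
    (fun t ht x => duhamel_nonneg (hρ₀0 x) (fun s => (hR s x).1) ht.1)
    (fun t ht x => duhamel_le_mul_exp (hhi x) (hRi x) ht.1 (fun s _ => (hh s x).1) (hρ₀0 x)
      ((le_abs_self _).trans (hρ₀le x)) (fun s _ => (hR s x).1)
      fun s hs => hsource s ⟨hs.1, hs.2.trans ht.2⟩ x)
  refine (abs_duhamel_sub_le (hhi x) (hRi x) (fun σ => hh0 σ x) (fun σ => (hh σ x).2)
    (fun σ => (abs_of_nonneg (hR σ x).1).trans_le (hR σ x).2) hs.1 hst).trans ?_
  gcongr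
  exacts [hρ₀le x, hs.2]

theorem memB_Fmap (hc₁ : HasConstMarginals₃ c₁ C1) (hc₂ : HasConstMarginals₂ c₂ C2)
    (hC2 : 0 ≤ C2) (hφ₁m : Measurable φ₁) (hφ₁ : ∀ u, 0 ≤ φ₁ u) (hφ₂m : Measurable φ₂)
    (hφ₂ : ∀ u, 0 ≤ φ₂ u) {r γ T : ℝ} (hT : 0 ≤ T)
    (hcond : 3 / 2 * C1 * r * Real.exp (γ * C2 * T) ≤ (γ - 1) * C2)
    {ρ₀ : Rd d → ℝ} (hρ₀ : MemLinf ρ₀) (hρ₀0 : ∀ x, 0 ≤ ρ₀ x) (hρ₀r : linf ρ₀ ≤ r)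
    {ρ : ℝ → Rd d → ℝ} (hρ : memB T γ C2 r ρ) : memB T γ C2 r (Fmap c₁ c₂ φ₁ φ₂ C2 ρ₀ ρ) := by
  have hC1 := hc₁.const_nonneg
  have hr : 0 ≤ r := (linf_nonneg ρ₀).trans hρ₀r
  have hγ : 0 ≤ γ * C2 := by
    have : 0 ≤ (γ - 1) * C2 := le_trans (by positivity) hcond
    nlinarith
  -- Freezing the rates along `ρ` extended constantly beyond `[0, T]` makes them bounded and
  -- jointly measurable on all of `ℝ × ℝ^d`, as the lemmas on `duhamel` require.
  set ρb := IccExtend hT fun t : Icc (0:ℝ) T => ρ t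
  have hρb := IccExtend_mem_Icc_of_memB hT hρ
  set M := r * Real.exp (γ * C2 * T)
  have hρbM : ∀ s x, ρb s x ∈ Icc 0 M := fun s x =>
    ⟨(hρb s x).1, (hρb s x).2.trans (mul_le_mul_of_nonneg_left
      (Real.exp_le_exp.2 (mul_le_mul_of_nonneg_left (projIcc 0 T hT s).2.2 hγ)) hr)⟩
  have hρbm := measurable_uncurry_IccExtend hT hρ.1 hρ.2.1
  have hρb_eq : ∀ t ∈ Icc (0:ℝ) T, ∀ s ∈ Icc 0 t, ρb s = ρ s := fun t ht s hs =>
    IccExtend_of_mem hT _ ⟨hs.1, hs.2.trans ht.2⟩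
  refine memB_congr (fun t ht => funext fun x => duhamel_congr ht.1
      (fun s hs => congrArg (fun f => hker c₁ C2 f x) (hρb_eq t ht s hs))
      (fun s hs => congrArg (fun f => R2 c₁ c₂ φ₁ φ₂ f x) (hρb_eq t ht s hs)))
    (memB_duhamel hT hC2 (measurable_hker hc₁.measurable hρbm)
      (measurable_R2 hc₁.measurable hc₂.measurable hφ₁m hφ₂m hρbm)
      (fun s x => hker_mem_Icc hc₁ (hρbM s) x) (fun s x => R2_mem_Icc hc₁ hc₂ hφ₁ hφ₂ (hρbM s) x)
      (fun s hs x => ?_) hρ₀ hρ₀0 hρ₀r)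
  have hproj : (projIcc 0 T hT s : ℝ) = s := congrArg Subtype.val (projIcc_of_mem hT hs)
  have hκ : 3 / 2 * C1 * (r * Real.exp (γ * C2 * s)) ≤ (γ - 1) * C2 :=
    le_trans (by rw [← mul_assoc]; gcongr; exact hs.2) hcond
  convert R2_le_mul hc₁ hc₂ hφ₁ hφ₂ (fun y => hproj ▸ hρb s y) hκ x using 1
  ring

theorem exists_pos_forall_memB_Fmap (hc₁ : HasConstMarginals₃ c₁ C1)
    (hc₂ : HasConstMarginals₂ c₂ C2) (hC2 : 0 < C2) (hφ₁m : Measurable φ₁)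
    (hφ₁ : ∀ u, 0 ≤ φ₁ u) (hφ₂m : Measurable φ₂) (hφ₂ : ∀ u, 0 ≤ φ₂ u) {r γ : ℝ} (hr : 0 ≤ r)
    (hγ : γ > 1 + 3 * C1 * r / (2 * C2)) :
    ∃ Tmax > (0:ℝ), ∀ T' : ℝ, 0 ≤ T' → T' ≤ Tmax →
      ∀ ρ₀ : Rd d → ℝ, MemLinf ρ₀ → (∀ x, 0 ≤ ρ₀ x) → linf ρ₀ ≤ r →
        ∀ ρ : ℝ → Rd d → ℝ, memB T' γ C2 r ρ → memB T' γ C2 r (Fmap c₁ c₂ φ₁ φ₂ C2 ρ₀ ρ) := by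
  have hC1 := hc₁.const_nonneg
  have hγC2 : 3 / 2 * C1 * r < (γ - 1) * C2 := by
    have := (div_lt_iff₀ (by positivity)).1 (lt_sub_iff_add_lt'.2 hγ)
    linarith
  have hγ0 : 0 ≤ γ := by linarith [show 0 ≤ 3 * C1 * r / (2 * C2) by positivity]
  obtain ⟨Tmax, hTmax, hcond⟩ :=
    exists_pos_forall_mul_exp_le (b := γ * C2) (by positivity) (by positivity) hγC2
  exact ⟨Tmax, hTmax, fun T' hT' hT'le ρ₀ hρ₀ hρ₀0 hρ₀r ρ hρ => memB_Fmap hc₁ hc₂ hC2.le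
    hφ₁m hφ₁ hφ₂m hφ₂ hT' (hcond T' hT'le) hρ₀ hρ₀0 hρ₀r hρ⟩

end FixedPointMap

theorem statement1_general {d : ℕ}
    (c₁ : Rd d → Rd d → Rd d → ℝ) (C1 : ℝ)
    (hc₁meas : Measurable fun p : Rd d × Rd d × Rd d => c₁ p.1 p.2.1 p.2.2)
    (hc₁nn : ∀ x y z, 0 ≤ c₁ x y z)
    (hc₁int₁₂ : ∀ z, Integrable fun p : Rd d × Rd d => c₁ p.1 p.2 z)
    (hc₁int₁₃ : ∀ y, Integrable fun p : Rd d × Rd d => c₁ p.1 y p.2)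
    (hc₁int₂₃ : ∀ x, Integrable fun p : Rd d × Rd d => c₁ x p.1 p.2)
    (hc₁val₁₂ : ∀ z, (∫ x, ∫ y, c₁ x y z) = C1)
    (hc₁val₁₃ : ∀ y, (∫ x, ∫ z, c₁ x y z) = C1)
    (hc₁val₂₃ : ∀ x, (∫ y, ∫ z, c₁ x y z) = C1)
    (c₂ : Rd d → Rd d → ℝ) (C2 : ℝ)
    (hc₂meas : Measurable fun p : Rd d × Rd d => c₂ p.1 p.2)
    (hc₂nn : ∀ x y, 0 ≤ c₂ x y)
    (hc₂int₁ : ∀ y, Integrable fun x => c₂ x y)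
    (hc₂int₂ : ∀ x, Integrable fun y => c₂ x y)
    (hc₂val₁ : ∀ y, (∫ x, c₂ x y) = C2)
    (hc₂val₂ : ∀ x, (∫ y, c₂ x y) = C2)
    (hC2pos : 0 < C2)
    (φ₁ : Rd d → ℝ) (hφ₁meas : Measurable φ₁) (hφ₁nn : ∀ u, 0 ≤ φ₁ u)
    (φ₂ : Rd d → ℝ) (hφ₂meas : Measurable φ₂) (hφ₂nn : ∀ u, 0 ≤ φ₂ u)
    (r : ℝ) (hr : 0 < r) :
    (∃ γ > (0:ℝ), ∃ Tmax > (0:ℝ), ∀ T' : ℝ, 0 ≤ T' → T' ≤ Tmax →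
        ∀ ρ₀ : Rd d → ℝ, MemLinf ρ₀ → (∀ x, 0 ≤ ρ₀ x) → linf ρ₀ ≤ r →
          ∀ ρ : ℝ → Rd d → ℝ, memB T' γ C2 r ρ →
            memB T' γ C2 r (Fmap c₁ c₂ φ₁ φ₂ C2 ρ₀ ρ)) ∧
    (∀ γ : ℝ, γ > 1 + 3 * C1 * r / (2 * C2) → ∃ Tmax > (0:ℝ), ∀ T' : ℝ, 0 ≤ T' → T' ≤ Tmax →
        ∀ ρ₀ : Rd d → ℝ, MemLinf ρ₀ → (∀ x, 0 ≤ ρ₀ x) → linf ρ₀ ≤ r →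
          ∀ ρ : ℝ → Rd d → ℝ, memB T' γ C2 r ρ →
            memB T' γ C2 r (Fmap c₁ c₂ φ₁ φ₂ C2 ρ₀ ρ)) := by
  have hc₁ : HasConstMarginals₃ c₁ C1 :=
    ⟨hc₁meas, hc₁nn, hc₁int₁₂, hc₁int₁₃, hc₁int₂₃, hc₁val₁₂, hc₁val₁₃, hc₁val₂₃⟩
  have hc₂ : HasConstMarginals₂ c₂ C2 := ⟨hc₂meas, hc₂nn, hc₂int₁, hc₂int₂, hc₂val₁, hc₂val₂⟩
  have hfrac : 0 ≤ 3 * C1 * r / (2 * C2) := by have := hc₁.const_nonneg; positivity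
  have invariant := fun γ (hγ : γ > 1 + 3 * C1 * r / (2 * C2)) =>
    exists_pos_forall_memB_Fmap hc₁ hc₂ hC2pos hφ₁meas hφ₁nn hφ₂meas hφ₂nn hr.le hγ
  exact ⟨⟨2 + 3 * C1 * r / (2 * C2), by linarith, invariant _ (by linarith)⟩, invariant⟩

theorem statement1 {d : ℕ} (hd : 1 ≤ d)
    (c₁ : Rd d → Rd d → Rd d → ℝ) (C1 : ℝ)
    (hc₁meas : Measurable fun p : Rd d × Rd d × Rd d => c₁ p.1 p.2.1 p.2.2)
    (hc₁nn : ∀ x y z, 0 ≤ c₁ x y z)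
    (hc₁sym : ∀ x y z, c₁ x y z = c₁ y x z)
    (hc₁int₁₂ : ∀ z, Integrable fun p : Rd d × Rd d => c₁ p.1 p.2 z)
    (hc₁int₁₃ : ∀ y, Integrable fun p : Rd d × Rd d => c₁ p.1 y p.2)
    (hc₁int₂₃ : ∀ x, Integrable fun p : Rd d × Rd d => c₁ x p.1 p.2)
    (hc₁val₁₂ : ∀ z, (∫ x, ∫ y, c₁ x y z) = C1)
    (hc₁val₁₃ : ∀ y, (∫ x, ∫ z, c₁ x y z) = C1)
    (hc₁val₂₃ : ∀ x, (∫ y, ∫ z, c₁ x y z) = C1)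
    (c₂ : Rd d → Rd d → ℝ) (C2 : ℝ)
    (hc₂meas : Measurable fun p : Rd d × Rd d => c₂ p.1 p.2)
    (hc₂nn : ∀ x y, 0 ≤ c₂ x y)
    (hc₂int₁ : ∀ y, Integrable fun x => c₂ x y)
    (hc₂int₂ : ∀ x, Integrable fun y => c₂ x y)
    (hc₂val₁ : ∀ y, (∫ x, c₂ x y) = C2)
    (hc₂val₂ : ∀ x, (∫ y, c₂ x y) = C2)
    (hC2pos : 0 < C2)
    (φ₁ : Rd d → ℝ) (Φ₁ : ℝ) (hφ₁meas : Measurable φ₁) (hφ₁nn : ∀ u, 0 ≤ φ₁ u)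
    (hφ₁int : Integrable φ₁) (hφ₁val : (∫ u, φ₁ u) = Φ₁)
    (φ₂ : Rd d → ℝ) (Φ₂ : ℝ) (hφ₂meas : Measurable φ₂) (hφ₂nn : ∀ u, 0 ≤ φ₂ u)
    (hφ₂int : Integrable φ₂) (hφ₂val : (∫ u, φ₂ u) = Φ₂)
    (r : ℝ) (hr : 0 < r) :
    (∃ γ > (0:ℝ), ∃ Tmax > (0:ℝ), ∀ T' : ℝ, 0 ≤ T' → T' ≤ Tmax →
        ∀ ρ₀ : Rd d → ℝ, MemLinf ρ₀ → (∀ x, 0 ≤ ρ₀ x) → linf ρ₀ ≤ r →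
          ∀ ρ : ℝ → Rd d → ℝ, memB T' γ C2 r ρ →
            memB T' γ C2 r (Fmap c₁ c₂ φ₁ φ₂ C2 ρ₀ ρ)) ∧
    (∀ γ : ℝ, γ > 1 + 3 * C1 * r / (2 * C2) → ∃ Tmax > (0:ℝ), ∀ T' : ℝ, 0 ≤ T' → T' ≤ Tmax →
        ∀ ρ₀ : Rd d → ℝ, MemLinf ρ₀ → (∀ x, 0 ≤ ρ₀ x) → linf ρ₀ ≤ r →
          ∀ ρ : ℝ → Rd d → ℝ, memB T' γ C2 r ρ →
            memB T' γ C2 r (Fmap c₁ c₂ φ₁ φ₂ C2 ρ₀ ρ)) :=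
  statement1_general c₁ C1 hc₁meas hc₁nn hc₁int₁₂ hc₁int₁₃ hc₁int₂₃ hc₁val₁₂ hc₁val₁₃ hc₁val₂₃ c₂ C2
    hc₂meas hc₂nn hc₂int₁ hc₂int₂ hc₂val₁ hc₂val₂ hC2pos φ₁ hφ₁meas hφ₁nn φ₂ hφ₂meas hφ₂nn r hr
end
end

section
/- Let ρ, ψ ∈ L^∞(ℝ^d) with ρ, ψ ≥ 0 and ‖ρ‖_{L^∞}, ‖ψ‖_{L^∞} ≤ M. Then for every x ∈ ℝ^d, ∫ c₂(y;x) | exp(−∫ φ₂(x−u) ρ(u) du) ρ(y) − exp(−∫ φ₂(x−u) ψ(u) du) ψ(y) | dy ≤ ⟨c₂⟩ ( ⟨φ₂⟩ M + 1 ) ‖ρ − ψ‖_{L^∞}, and likewise ∫ c₂(x;y) | [1 − exp(−∫ φ₂(y−u) ρ(u) du)] ρ(x) − [1 − exp(−∫ φ₂(y−u) ψ(u) du)] ψ(x) | dy ≤ ⟨c₂⟩ ( ⟨φ₂⟩ M + 1 ) ‖ρ − ψ‖_{L^∞}. -/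
open MeasureTheory Set

noncomputable section

/-!
Write `e_ρ(z) = exp (-∫ φ₂(z - u) ρ(u) du)`. Since `exp ∘ neg` is `1`-Lipschitz on `[0, ∞)`,
`|e_ρ(z) - e_ψ(z)| ≤ ⟨φ₂⟩ ‖ρ - ψ‖_∞`. Both integrands have the form `|a r - b s|` with
`a ∈ [0, 1]`, `|a - b| ≤ ⟨φ₂⟩ ‖ρ - ψ‖_∞`, `|r - s| ≤ ‖ρ - ψ‖_∞` and `0 ≤ s ≤ M`, so splitting
`a r - b s = a (r - s) + (a - b) s` bounds them pointwise by `(⟨φ₂⟩ M + 1) ‖ρ - ψ‖_∞`;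
integrating against `c₂` contributes the factor `⟨c₂⟩`.
-/

theorem Real.abs_exp_neg_sub_exp_neg_le {a b : ℝ} (ha : 0 ≤ a) (hb : 0 ≤ b) :
    |Real.exp (-a) - Real.exp (-b)| ≤ |a - b| := by
  wlog hab : a ≤ b generalizing a b
  · rw [abs_sub_comm, abs_sub_comm a]
    exact this hb ha (le_of_not_ge hab)
  have hexp_le : Real.exp (-b) ≤ Real.exp (-a) := Real.exp_le_exp.mpr (neg_le_neg hab)
  rw [abs_of_nonneg (sub_nonneg.mpr hexp_le), abs_of_nonpos (sub_nonpos.mpr hab)]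
  calc Real.exp (-a) - Real.exp (-b) = Real.exp (-a) * (1 - Real.exp (-(b - a))) := by
        rw [mul_sub, mul_one, ← Real.exp_add]; ring_nf
    _ ≤ 1 * (b - a) := by
        refine mul_le_mul (Real.exp_le_one_iff.mpr (neg_nonpos.mpr ha))
          (by linarith [Real.one_sub_le_exp_neg (b - a)]) ?_ zero_le_one
        linarith [Real.exp_le_one_iff.mpr (neg_nonpos.mpr (sub_nonneg.mpr hab))]
    _ = -(a - b) := by ring

theorem abs_mul_sub_mul_le {a b r s E N M : ℝ} (ha₀ : 0 ≤ a) (ha₁ : a ≤ 1)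
    (hab : |a - b| ≤ E) (hrs : |r - s| ≤ N) (hs₀ : 0 ≤ s) (hsM : s ≤ M) :
    |a * r - b * s| ≤ E * M + N := by
  calc |a * r - b * s| = |a * (r - s) + (a - b) * s| := by ring_nf
    _ ≤ a * |r - s| + |a - b| * s := by
        refine (abs_add_le _ _).trans_eq ?_
        rw [abs_mul, abs_mul, abs_of_nonneg ha₀, abs_of_nonneg hs₀]
    _ ≤ 1 * N + E * M := by
        gcongr
        exact (abs_nonneg _).trans hab
    _ = E * M + N := by ring

theorem integral_mul_le_integral_mul_const {α : Type*} [MeasurableSpace α] {μ : Measure α}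
    {c f : α → ℝ} {K : ℝ} (hc : Integrable c μ) (hc₀ : ∀ y, 0 ≤ c y) (hf₀ : ∀ y, 0 ≤ f y)
    (hfK : ∀ y, f y ≤ K) :
    ∫ y, c y * f y ∂μ ≤ (∫ y, c y ∂μ) * K := by
  rw [← integral_mul_const]
  exact integral_mono_of_nonneg (ae_of_all _ fun y => mul_nonneg (hc₀ y) (hf₀ y))
    (hc.mul_const K) (ae_of_all _ fun y => mul_le_mul_of_nonneg_left (hfK y) (hc₀ y))

namespace MemLinf

variable {d : ℕ} {f g : Rd d → ℝ}

theorem bddAbove (hf : MemLinf f) : BddAbove (range fun x => |f x|) := by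
  obtain ⟨M, hM⟩ := hf.2
  exact ⟨M, by rintro _ ⟨x, rfl⟩; exact hM x⟩

theorem abs_le_linf (hf : MemLinf f) (x : Rd d) : |f x| ≤ linf f :=
  le_ciSup hf.bddAbove x

theorem le_linf (hf : MemLinf f) (x : Rd d) : f x ≤ linf f :=
  (le_abs_self _).trans (hf.abs_le_linf x)

theorem sub (hf : MemLinf f) (hg : MemLinf g) : MemLinf fun x => f x - g x := by
  obtain ⟨Mf, hMf⟩ := hf.2
  obtain ⟨Mg, hMg⟩ := hg.2
  exact ⟨hf.1.sub hg.1, Mf + Mg, fun x => (abs_sub _ _).trans (add_le_add (hMf x) (hMg x))⟩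

theorem integrable_mul {μ : Measure (Rd d)} {k : Rd d → ℝ} (hk : Integrable k μ)
    (hf : MemLinf f) : Integrable (fun u => k u * f u) μ := by
  obtain ⟨M, hM⟩ := hf.2
  exact hk.mul_bdd hf.1.aestronglyMeasurable (ae_of_all _ hM)

theorem abs_integral_mul_sub_le {μ : Measure (Rd d)} {k : Rd d → ℝ} (hk : Integrable k μ)
    (hk₀ : ∀ u, 0 ≤ k u) (hf : MemLinf f) (hg : MemLinf g) :
    |(∫ u, k u * f u ∂μ) - ∫ u, k u * g u ∂μ| ≤ (∫ u, k u ∂μ) * linf fun u => f u - g u := by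
  rw [← integral_sub (hf.integrable_mul hk) (hg.integrable_mul hk),
    ← integral_mul_const, ← Real.norm_eq_abs]
  refine norm_integral_le_of_norm_le (hk.mul_const _) (ae_of_all _ fun u => ?_)
  rw [Real.norm_eq_abs, ← mul_sub, abs_mul, abs_of_nonneg (hk₀ u)]
  exact mul_le_mul_of_nonneg_left ((hf.sub hg).abs_le_linf u) (hk₀ u)

end MemLinf

section Potential

variable {d : ℕ} {φ ρ ψ : Rd d → ℝ}

theorem integral_comp_sub_mul_nonneg (hφ₀ : ∀ u, 0 ≤ φ u) (hρ₀ : ∀ u, 0 ≤ ρ u) (z : Rd d) :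
    0 ≤ ∫ u, φ (z - u) * ρ u :=
  integral_nonneg fun u => mul_nonneg (hφ₀ _) (hρ₀ u)

theorem exp_neg_integral_mul_mem_Icc (hφ₀ : ∀ u, 0 ≤ φ u) (hρ₀ : ∀ u, 0 ≤ ρ u) (z : Rd d) :
    Real.exp (-∫ u, φ (z - u) * ρ u) ∈ Icc 0 1 :=
  ⟨Real.exp_nonneg _,
    Real.exp_le_one_iff.mpr (neg_nonpos.mpr (integral_comp_sub_mul_nonneg hφ₀ hρ₀ z))⟩

theorem abs_exp_neg_integral_mul_sub_le (hφ : Integrable φ) (hφ₀ : ∀ u, 0 ≤ φ u)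
    (hρ : MemLinf ρ) (hρ₀ : ∀ u, 0 ≤ ρ u) (hψ : MemLinf ψ) (hψ₀ : ∀ u, 0 ≤ ψ u) (z : Rd d) :
    |Real.exp (-∫ u, φ (z - u) * ρ u) - Real.exp (-∫ u, φ (z - u) * ψ u)|
      ≤ (∫ u, φ u) * linf fun u => ρ u - ψ u := by
  refine (Real.abs_exp_neg_sub_exp_neg_le (integral_comp_sub_mul_nonneg hφ₀ hρ₀ z)
    (integral_comp_sub_mul_nonneg hφ₀ hψ₀ z)).trans ?_
  have h := MemLinf.abs_integral_mul_sub_le (hφ.comp_sub_left z) (fun _ => hφ₀ _) hρ hψ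
  rwa [integral_sub_left_eq_self φ volume z] at h

end Potential

theorem statement8_general {d : ℕ}
    (c₂ : Rd d → Rd d → ℝ) (C2 : ℝ)
    (hc₂nn : ∀ x y, 0 ≤ c₂ x y)
    (hc₂int₁ : ∀ y, Integrable fun x => c₂ x y)
    (hc₂int₂ : ∀ x, Integrable fun y => c₂ x y)
    (hc₂val₁ : ∀ y, (∫ x, c₂ x y) = C2)
    (hc₂val₂ : ∀ x, (∫ y, c₂ x y) = C2)
    (φ₂ : Rd d → ℝ) (Φ₂ : ℝ) (hφ₂nn : ∀ u, 0 ≤ φ₂ u)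
    (hφ₂int : Integrable φ₂) (hφ₂val : (∫ u, φ₂ u) = Φ₂)
    (ρ ψ : Rd d → ℝ) (hρmem : MemLinf ρ) (hρnn : ∀ x, 0 ≤ ρ x)
    (hψmem : MemLinf ψ) (hψnn : ∀ x, 0 ≤ ψ x)
    (M : ℝ) (hψM : linf ψ ≤ M) (x : Rd d) :
    (∫ y, c₂ y x * |Real.exp (-∫ u, φ₂ (x - u) * ρ u) * ρ y
        - Real.exp (-∫ u, φ₂ (x - u) * ψ u) * ψ y|)
      ≤ C2 * (Φ₂ * M + 1) * linf (fun u => ρ u - ψ u) ∧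
    (∫ y, c₂ x y * |(1 - Real.exp (-∫ u, φ₂ (y - u) * ρ u)) * ρ x
        - (1 - Real.exp (-∫ u, φ₂ (y - u) * ψ u)) * ψ x|)
      ≤ C2 * (Φ₂ * M + 1) * linf (fun u => ρ u - ψ u) := by
  set N := linf fun u => ρ u - ψ u
  have hN : ∀ u, |ρ u - ψ u| ≤ N := (hρmem.sub hψmem).abs_le_linf
  have hψ_le : ∀ u, ψ u ≤ M := fun u => (hψmem.le_linf u).trans hψM
  have hexp : ∀ z, |Real.exp (-∫ u, φ₂ (z - u) * ρ u) - Real.exp (-∫ u, φ₂ (z - u) * ψ u)|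
      ≤ Φ₂ * N := by
    simpa only [hφ₂val] using
      abs_exp_neg_integral_mul_sub_le hφ₂int hφ₂nn hρmem hρnn hψmem hψnn
  have hexp_compl : ∀ z, |(1 - Real.exp (-∫ u, φ₂ (z - u) * ρ u))
      - (1 - Real.exp (-∫ u, φ₂ (z - u) * ψ u))| ≤ Φ₂ * N := fun z => by
    rw [sub_sub_sub_cancel_left, abs_sub_comm]; exact hexp z
  have hexp_mem := exp_neg_integral_mul_mem_Icc hφ₂nn hρnn
  constructor
  · calc _ ≤ (∫ y, c₂ y x) * (Φ₂ * N * M + N) :=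
          integral_mul_le_integral_mul_const (hc₂int₁ x) (fun y => hc₂nn y x)
            (fun y => abs_nonneg _) fun y => abs_mul_sub_mul_le (hexp_mem x).1 (hexp_mem x).2
              (hexp x) (hN y) (hψnn y) (hψ_le y)
      _ = C2 * (Φ₂ * M + 1) * N := by rw [hc₂val₁]; ring
  · calc _ ≤ (∫ y, c₂ x y) * (Φ₂ * N * M + N) :=
          integral_mul_le_integral_mul_const (hc₂int₂ x) (hc₂nn x) (fun y => abs_nonneg _)
            fun y => abs_mul_sub_mul_le (sub_nonneg.mpr (hexp_mem y).2)
              (sub_le_self _ (hexp_mem y).1) (hexp_compl y) (hN x) (hψnn x) (hψ_le x)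
      _ = C2 * (Φ₂ * M + 1) * N := by rw [hc₂val₂]; ring

theorem statement8 {d : ℕ} (hd : 1 ≤ d)
    (c₂ : Rd d → Rd d → ℝ) (C2 : ℝ)
    (hc₂meas : Measurable fun p : Rd d × Rd d => c₂ p.1 p.2)
    (hc₂nn : ∀ x y, 0 ≤ c₂ x y)
    (hc₂int₁ : ∀ y, Integrable fun x => c₂ x y)
    (hc₂int₂ : ∀ x, Integrable fun y => c₂ x y)
    (hc₂val₁ : ∀ y, (∫ x, c₂ x y) = C2)
    (hc₂val₂ : ∀ x, (∫ y, c₂ x y) = C2)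
    (φ₂ : Rd d → ℝ) (Φ₂ : ℝ) (hφ₂meas : Measurable φ₂) (hφ₂nn : ∀ u, 0 ≤ φ₂ u)
    (hφ₂int : Integrable φ₂) (hφ₂val : (∫ u, φ₂ u) = Φ₂)
    (ρ ψ : Rd d → ℝ) (hρmem : MemLinf ρ) (hρnn : ∀ x, 0 ≤ ρ x)
    (hψmem : MemLinf ψ) (hψnn : ∀ x, 0 ≤ ψ x)
    (M : ℝ) (hρM : linf ρ ≤ M) (hψM : linf ψ ≤ M) (x : Rd d) :
    (∫ y, c₂ y x * |Real.exp (-∫ u, φ₂ (x - u) * ρ u) * ρ y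
        - Real.exp (-∫ u, φ₂ (x - u) * ψ u) * ψ y|)
      ≤ C2 * (Φ₂ * M + 1) * linf (fun u => ρ u - ψ u) ∧
    (∫ y, c₂ x y * |(1 - Real.exp (-∫ u, φ₂ (y - u) * ρ u)) * ρ x
        - (1 - Real.exp (-∫ u, φ₂ (y - u) * ψ u)) * ψ x|)
      ≤ C2 * (Φ₂ * M + 1) * linf (fun u => ρ u - ψ u) :=
  statement8_general c₂ C2 hc₂nn hc₂int₁ hc₂int₂ hc₂val₁ hc₂val₂ φ₂ Φ₂ hφ₂nn hφ₂int hφ₂val ρ ψ hρmem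
    hρnn hψmem hψnn M hψM x
end
end
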